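/- For the pair weight function w_p on Z_2^k with k ≥ 2 and any t ≥ 1, the optimal FCSPC redundancy satisfies r_p^{w_p}(k,t) ≥ 2t − 1. -/

import Mathlib

open scoped Classical

/-- The pair distance: Hamming distance of the cyclic symbol-pair read vectors. -/
def pairDist {n : ℕ} (x y : Fin n → ZMod 2) : ℕ :=
  (Finset.univ.filter fun i : Fin n =>
    (x i, x (i + ⟨1 % n, Nat.mod_lt 1 i.pos⟩)) ≠ (y i, y (i + ⟨1 % n, Nat.mod_lt 1 i.pos⟩))).card

/-- The optimal redundancy `r_p^f(k,t)` of a function-correcting symbol-pair code for `f`: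
the smallest `r` admitting an encoding `u ↦ (u, p u)` such that codewords of messages with
distinct function values have pair distance at least `2t+1`. -/
noncomputable def rp {α : Type*} (k t : ℕ) (f : (Fin k → ZMod 2) → α) : ℕ :=
  sInf {r : ℕ | ∃ p : (Fin k → ZMod 2) → Fin r → ZMod 2,
    ∀ u v : Fin k → ZMod 2, f u ≠ f v →
      2 * t + 1 ≤ pairDist (Fin.append u (p u)) (Fin.append v (p v))}

/-- `N_p(D)`: smallest length `r` for which a `D`-irregular-pair-distance code exists. -/
noncomputable def Np {M : ℕ} (D : Fin M → Fin M → ℕ) : ℕ :=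
  sInf {r : ℕ | ∃ p : Fin M → Fin r → ZMod 2, ∀ i j, D i j ≤ pairDist (p i) (p j)}

/-- `N_p(M,D)`: smallest length admitting `M` vectors with pairwise pair distance ≥ `D`. -/
noncomputable def NpConst (M D : ℕ) : ℕ :=
  sInf {r : ℕ | ∃ p : Fin M → Fin r → ZMod 2,
    Function.Injective p ∧ ∀ i j, i ≠ j → D ≤ pairDist (p i) (p j)}

/-- The pair-distance matrix `D_f^{(1)}`. -/
noncomputable def Dmat1 {α : Type*} {k M : ℕ} (t : ℕ) (f : (Fin k → ZMod 2) → α)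
    (u : Fin M → Fin k → ZMod 2) : Fin M → Fin M → ℕ :=
  fun i j => if f (u i) ≠ f (u j) then 2 * t - pairDist (u i) (u j) else 0

/-- The pair-distance matrix `D_f^{(2)}`. -/
noncomputable def Dmat2 {α : Type*} {k M : ℕ} (t : ℕ) (f : (Fin k → ZMod 2) → α)
    (u : Fin M → Fin k → ZMod 2) : Fin M → Fin M → ℕ :=
  fun i j => if f (u i) ≠ f (u j) then 2 * t + 2 - pairDist (u i) (u j) else 0

/-- The pair weight `w_p(u) = d_p(u, 0)`. -/
noncomputable def pairWeight {k : ℕ} (u : Fin k → ZMod 2) : ℕ :=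
  pairDist u (fun _ => 0)

lemma append_eval_lt {k r : ℕ} (u : Fin k → ZMod 2) (w : Fin r → ZMod 2)
    (i : Fin (k + r)) (h : i.val < k) : Fin.append u w i = u ⟨i.val, h⟩ := by
  have : i = Fin.castAdd r ⟨i.val, h⟩ := by ext; rfl
  conv_lhs => rw [this]
  rw [Fin.append_left]

lemma hamming_le_pairDist {n : ℕ} (x y : Fin n → ZMod 2) :
    (Finset.univ.filter fun i => x i ≠ y i).card ≤ pairDist x y := by
  apply Finset.card_le_card
  intro i hi
  simp only [Finset.mem_filter, Finset.mem_univ, true_and, pairDist] at *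
  intro h
  exact hi (congrArg Prod.fst h)

theorem stmt_17 (k t : ℕ) (hk : 2 ≤ k) (ht : 1 ≤ t) :
    2 * t - 1 ≤ rp k t (pairWeight (k := k)) := by
  have hkpos : 0 < k := by omega
  -- The defining set is nonempty: repetition code works.
  have hne : {r : ℕ | ∃ p : (Fin k → ZMod 2) → Fin r → ZMod 2,
      ∀ u v : Fin k → ZMod 2, pairWeight u ≠ pairWeight v →
        2 * t + 1 ≤ pairDist (Fin.append u (p u)) (Fin.append v (p v))}.Nonempty := by
    refine ⟨(2 * t + 1) * k, fun u i => u ⟨i.val % k, Nat.mod_lt _ hkpos⟩, ?_⟩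
    intro u v huv
    have huvne : u ≠ v := by rintro rfl; exact huv rfl
    obtain ⟨j, hj⟩ := Function.ne_iff.mp huvne
    refine le_trans ?_ (hamming_le_pairDist _ _)
    have := Finset.card_le_card_of_injOn
      (f := fun ℓ : Fin (2 * t + 1) =>
        Fin.natAdd k ⟨j.val + ℓ.val * k, by
          have := ℓ.isLt
          have := j.isLt
          calc j.val + ℓ.val * k < k + ℓ.val * k := by omega
          _ = (ℓ.val + 1) * k := by ring
          _ ≤ (2 * t + 1) * k := Nat.mul_le_mul_right _ (by omega)⟩)
      (s := (Finset.univ : Finset (Fin (2 * t + 1))))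
      (t := Finset.univ.filter fun i =>
        Fin.append u (fun i => u ⟨i.val % k, Nat.mod_lt _ hkpos⟩) i ≠
        Fin.append v (fun i => v ⟨i.val % k, Nat.mod_lt _ hkpos⟩) i)
      ?_ ?_
    · simpa using this
    · intro ℓ _
      simp only [Finset.mem_filter, Finset.mem_univ, true_and, Fin.append_right]
      have hmod : (j.val + ℓ.val * k) % k = j.val := by
        rw [Nat.add_mul_mod_self_right, Nat.mod_eq_of_lt j.isLt]
      rw [Finset.mem_coe, Finset.mem_filter]
      refine ⟨Finset.mem_univ _, ?_⟩
      rw [Fin.append_right, Fin.append_right]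
      simpa [hmod] using hj
    · intro a _ b _ hab
      have : (a : ℕ) * k = (b : ℕ) * k := by
        have := congrArg Fin.val hab
        simp only [Fin.natAdd, Fin.mk.injEq] at this
        omega
      exact Fin.ext (Nat.eq_of_mul_eq_mul_right hkpos this)
  refine le_csInf hne ?_
  rintro r ⟨p, hp⟩
  -- test vectors : 0 and the indicator of position k-1
  set u0 : Fin k → ZMod 2 := fun _ => 0 with hu0
  set v0 : Fin k → ZMod 2 := fun i => if i.val = k - 1 then 1 else 0 with hv0
  have hw0 : pairWeight u0 = 0 := by
    simp [pairWeight, pairDist, u0]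
  have hwv : pairWeight v0 ≠ 0 := by
    simp only [pairWeight, pairDist]
    intro h
    rw [Finset.card_eq_zero, Finset.filter_eq_empty_iff] at h
    have := h (Finset.mem_univ (⟨k - 1, by omega⟩ : Fin k))
    apply this
    intro hcontr
    have h1 : v0 ⟨k - 1, by omega⟩ = 0 := congrArg Prod.fst hcontr
    simp [v0] at h1
  have hd := hp u0 v0 (by rw [hw0]; exact fun h => hwv h.symm)
  -- bound the pair distance by r + 2
  have hle : pairDist (Fin.append u0 (p u0)) (Fin.append v0 (p v0)) ≤ r + 2 := by
    have hsub : (Finset.univ.filter fun i : Fin (k + r) =>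
        (Fin.append u0 (p u0) i,
          Fin.append u0 (p u0) (i + ⟨1 % (k + r), Nat.mod_lt 1 i.pos⟩)) ≠
        (Fin.append v0 (p v0) i,
          Fin.append v0 (p v0) (i + ⟨1 % (k + r), Nat.mod_lt 1 i.pos⟩))) ⊆
        Finset.univ.filter fun i : Fin (k + r) => k - 2 ≤ i.val := by
      intro i hi
      simp only [Finset.mem_filter, Finset.mem_univ, true_and] at hi ⊢
      by_contra hlt
      push_neg at hlt
      apply hi
      have hmod1 : 1 % (k + r) = 1 := Nat.mod_eq_of_lt (by omega)
      have hival : i.val < k - 2 := hlt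
      have hsucc : (i + (⟨1 % (k + r), Nat.mod_lt 1 i.pos⟩ : Fin (k + r))).val
          = i.val + 1 := by
        rw [Fin.val_add]
        simp only [hmod1]
        exact Nat.mod_eq_of_lt (by omega)
      have h1 : i.val < k := by omega
      have h2 : (i + (⟨1 % (k + r), Nat.mod_lt 1 i.pos⟩ : Fin (k + r))).val < k := by
        rw [hsucc]; omega
      rw [append_eval_lt u0 (p u0) i h1, append_eval_lt v0 (p v0) i h1,
        append_eval_lt u0 (p u0) _ h2, append_eval_lt v0 (p v0) _ h2]
      have hv1 : v0 ⟨i.val, h1⟩ = 0 := by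
        simp only [v0, if_neg (by omega : ¬ i.val = k - 1)]
      have hv2 : v0 ⟨_, h2⟩ = 0 := by
        simp only [v0]
        rw [if_neg]
        rw [hsucc]; omega
      simp [u0, hv1, hv2]
    calc pairDist (Fin.append u0 (p u0)) (Fin.append v0 (p v0))
        ≤ (Finset.univ.filter fun i : Fin (k + r) => k - 2 ≤ i.val).card :=
          Finset.card_le_card hsub
      _ ≤ r + 2 := by
          have := Finset.card_le_card_of_injOn
            (f := fun i : Fin (k + r) => (⟨i.val - (k - 2), by
              have := i.isLt; omega⟩ : Fin (r + 2)))
            (s := Finset.univ.filter fun i : Fin (k + r) => k - 2 ≤ i.val)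
            (t := Finset.univ) (fun a _ => Finset.mem_univ _) ?_
          · simpa using this
          · intro a ha b hb hab
            simp only [Finset.mem_coe, Finset.mem_filter, Finset.mem_univ, true_and] at ha hb
            have := congrArg Fin.val hab
            simp only at this
            exact Fin.ext (by omega)
  omega
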